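/- arXiv:2201.13256 — 4 statements merged into one kernel-verified Lean document; each statement's English description precedes it below -/
import Mathlib

section
/- Let g : ℝⁿ → ℝ be C² with ∇g L-Lipschitz, L < 1, and let D = Id − ∇g. Define φ on Im(D) by φ(D(u)) = g(u) − ½‖∇g(u)‖². Then for every y ∈ ℝⁿ, the function x ↦ φ(x) + ½‖y−x‖² restricted to Im(D) attains its unique global minimum at x = D(y); i.e., D(y) = Prox_φ(y). -/
/-!
The objective at `x = D u` equals `g u + ⟪∇g u, y - u⟫ + ½‖y - u‖²`, i.e. the linearization of
`g` at `u` evaluated at `y` plus `½‖y - u‖²`. By the descent lemma this linearization exceeds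
`g y - (L/2)‖y - u‖²`, so the objective at `D u` is at least `g y + ((1 - L)/2)‖y - u‖²`,
while at `D y` it equals `g y`. Since `L < 1`, the minimum is attained exactly at `u = y`.
-/

open RealInnerProductSpace
open scoped Gradient

variable {E : Type*} [NormedAddCommGroup E] [InnerProductSpace ℝ E] [CompleteSpace E]

theorem hasDerivAt_comp_add_smul {g : E → ℝ} {u v : E} {t : ℝ}
    (hg : DifferentiableAt ℝ g (u + t • v)) :
    HasDerivAt (fun s : ℝ => g (u + s • v)) ⟪∇ g (u + t • v), v⟫ t := by
  have hline : HasDerivAt (fun s : ℝ => u + s • v) v t := by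
    simpa using ((hasDerivAt_id t).smul_const v).const_add u
  simpa [Function.comp_def] using
    (hasGradientAt_iff_hasFDerivAt.mp hg.hasGradientAt).comp_hasDerivAt t hline

theorem le_add_inner_gradient_add_half_mul_sq {g : E → ℝ} {L : ℝ} (hg : Differentiable ℝ g)
    (hlip : ∀ x y, ‖∇ g x - ∇ g y‖ ≤ L * ‖x - y‖) (u y : E) :
    g y ≤ g u + ⟪∇ g u, y - u⟫ + L / 2 * ‖y - u‖ ^ 2 := by
  set v := y - u
  let k : ℝ → ℝ := fun t => g (u + t • v) - t * ⟪∇ g u, v⟫ - L / 2 * t ^ 2 * ‖v‖ ^ 2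
  have hk : ∀ t, HasDerivAt k (⟪∇ g (u + t • v) - ∇ g u, v⟫ - L * t * ‖v‖ ^ 2) t := by
    intro t
    have hquad := ((hasDerivAt_pow 2 t).const_mul (L / 2)).mul_const (‖v‖ ^ 2)
    refine (((hasDerivAt_comp_add_smul (hg _)).sub
      ((hasDerivAt_id t).mul_const ⟪∇ g u, v⟫)).sub hquad).congr_deriv ?_
    rw [inner_sub_left]
    simp only [one_mul, Nat.cast_ofNat]
    ring
  have hk_anti : AntitoneOn k (Set.Ici 0) := by
    refine antitoneOn_of_hasDerivWithinAt_nonpos (convex_Ici 0)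
      (fun t _ => (hk t).continuousAt.continuousWithinAt)
      (fun t _ => (hk t).hasDerivWithinAt) fun t ht => ?_
    rw [interior_Ici, Set.mem_Ioi] at ht
    have hgrad : ⟪∇ g (u + t • v) - ∇ g u, v⟫ ≤ L * t * ‖v‖ ^ 2 :=
      calc ⟪∇ g (u + t • v) - ∇ g u, v⟫
          ≤ ‖∇ g (u + t • v) - ∇ g u‖ * ‖v‖ := real_inner_le_norm _ _
        _ ≤ L * ‖(u + t • v) - u‖ * ‖v‖ := by gcongr; exact hlip _ _
        _ = L * t * ‖v‖ ^ 2 := by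
          rw [add_sub_cancel_left, norm_smul, Real.norm_of_nonneg ht.le]; ring
    linarith
  have hk01 : k 1 ≤ k 0 := hk_anti Set.self_mem_Ici (Set.mem_Ici.mpr zero_le_one) zero_le_one
  have hk1 : k 1 = g y - ⟪∇ g u, y - u⟫ - L / 2 * ‖y - u‖ ^ 2 := by
    simp only [k, v, one_smul, add_sub_cancel]; ring
  have hk0 : k 0 = g u := by simp only [k, zero_smul, add_zero]; ring
  linarith

theorem add_half_mul_sq_le_prox_objective {g : E → ℝ} {L : ℝ} (hg : Differentiable ℝ g)
    (hlip : ∀ x y, ‖∇ g x - ∇ g y‖ ≤ L * ‖x - y‖) (u y : E) :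
    g y + (1 - L) / 2 * ‖y - u‖ ^ 2 ≤
      g u - ‖∇ g u‖ ^ 2 / 2 + ‖y - (u - ∇ g u)‖ ^ 2 / 2 := by
  have hexpand : ‖y - (u - ∇ g u)‖ ^ 2 = ‖y - u‖ ^ 2 + 2 * ⟪∇ g u, y - u⟫ + ‖∇ g u‖ ^ 2 := by
    rw [sub_sub_eq_add_sub, add_sub_right_comm, norm_add_sq_real, real_inner_comm]
  linarith [le_add_inner_gradient_add_half_mul_sq hg hlip u y]

/-- With `D = Id − ∇g`, `∇g` `L`-Lipschitz with `L < 1`, and `φ` defined on `Im D` by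
`φ(D u) = g(u) − ½‖∇g u‖²`, the function `x ↦ φ(x) + ½‖y − x‖²` restricted to `Im D`
attains its unique global minimum at `x = D y`. -/
theorem stmt_3 {n : ℕ} (g : EuclideanSpace ℝ (Fin n) → ℝ) (L : ℝ)
    (hg : ContDiff ℝ 2 g) (hL : L < 1)
    (hlip : ∀ x y, ‖gradient g x - gradient g y‖ ≤ L * ‖x - y‖)
    (D : EuclideanSpace ℝ (Fin n) → EuclideanSpace ℝ (Fin n))
    (hD : ∀ x, D x = x - gradient g x)
    (φ : EuclideanSpace ℝ (Fin n) → ℝ)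
    (hφ : ∀ u, φ (D u) = g u - ‖gradient g u‖ ^ 2 / 2) :
    ∀ y : EuclideanSpace ℝ (Fin n),
      (∀ x ∈ Set.range D, φ (D y) + ‖y - D y‖ ^ 2 / 2 ≤ φ x + ‖y - x‖ ^ 2 / 2) ∧
      (∀ x ∈ Set.range D,
        φ x + ‖y - x‖ ^ 2 / 2 = φ (D y) + ‖y - D y‖ ^ 2 / 2 → x = D y) := by
  intro y
  have hmin : ∀ u, g y + (1 - L) / 2 * ‖y - u‖ ^ 2 ≤ φ (D u) + ‖y - D u‖ ^ 2 / 2 := by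
    intro u
    rw [hφ, hD]
    exact add_half_mul_sq_le_prox_objective (hg.differentiable two_ne_zero) hlip u y
  have hval : φ (D y) + ‖y - D y‖ ^ 2 / 2 = g y := by
    rw [hφ, hD, sub_sub_cancel]; ring
  refine ⟨?_, ?_⟩
  · rintro _ ⟨u, rfl⟩
    nlinarith [hmin u, sq_nonneg ‖y - u‖]
  · rintro _ ⟨u, rfl⟩ heq
    have hsq : ‖y - u‖ ^ 2 ≤ 0 := by nlinarith [hmin u]
    have hyu : y = u := by
      rw [← sub_eq_zero, ← norm_eq_zero]
      exact pow_eq_zero_iff two_ne_zero |>.mp (le_antisymm hsq (sq_nonneg _))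
    rw [hyu]
end

section
/- With g C² with ∇g L-Lipschitz (L<1), D = Id − ∇g, and φ defined on Im(D) by φ(D(u)) = g(u) − ½‖∇g(u)‖²: the gradient of φ at x ∈ Im(D) equals D⁻¹(x) − x = ∇g(D⁻¹(x)). -/
/-!
Near `u`, `D = id - ∇g` has derivative `1 - ∇²g(u)`, which is invertible because
`‖∇²g(u)‖ ≤ L < 1`; so the inverse function theorem gives a local inverse and
`φ = ψ ∘ D⁻¹` near `D u`, with `ψ = g - ½‖∇g‖²`. Differentiating `ψ` gives
`dψ(u) = ⟪∇g(u), (1 - ∇²g(u)) ·⟫`, and the factor `1 - ∇²g(u)` cancels against the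
derivative of `D⁻¹`, leaving `∇φ(D u) = ∇g(u)`.
-/

open InnerProductSpace Topology NNReal

section InverseComp

variable {E F G : Type*} [NormedAddCommGroup E] [NormedSpace ℝ E] [CompleteSpace E]
  [NormedAddCommGroup F] [NormedSpace ℝ F]
  [NormedAddCommGroup G] [NormedSpace ℝ G]

theorem HasStrictFDerivAt.hasFDerivAt_of_hasFDerivAt_comp {D : E → F} {e : E ≃L[ℝ] F} {u : E}
    (hD : HasStrictFDerivAt D (e : E →L[ℝ] F) u) {φ : F → G} {ℓ : F →L[ℝ] G}
    (hφD : HasFDerivAt (φ ∘ D) (ℓ.comp (e : E →L[ℝ] F)) u) : HasFDerivAt φ ℓ (D u) := by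
  have hφ : (φ ∘ D) ∘ hD.localInverse D e u =ᶠ[𝓝 (D u)] φ := by
    filter_upwards [hD.eventually_right_inverse] with y hy
    simp only [Function.comp_apply, hy]
  rw [← hD.localInverse_apply_image] at hφD
  simpa [ContinuousLinearMap.comp_assoc] using
    (hφD.comp (D u) hD.to_localInverse.hasFDerivAt).congr_of_eventuallyEq hφ.symm

end InverseComp

variable {E : Type*} [NormedAddCommGroup E] [InnerProductSpace ℝ E] [CompleteSpace E]

theorem ContDiffAt.gradient {g : E → ℝ} {u : E} {n : WithTop ℕ∞}
    (hg : ContDiffAt ℝ (n + 1) g u) :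
    ContDiffAt ℝ n (gradient g) u :=
  (toDual ℝ E).symm.contDiff.contDiffAt.comp u hg.fderiv_right_succ

theorem HasGradientAt.hasFDerivAt_sub_half_norm_sq {g : E → ℝ} {G : E → E} {a u : E}
    {H : E →L[ℝ] E}
    (hg : HasGradientAt g a u) (hG : HasFDerivAt G H u) (hGu : G u = a) :
    HasFDerivAt (fun v => g v - ‖G v‖ ^ 2 / 2)
      ((toDual ℝ E a).comp (ContinuousLinearMap.id ℝ E - H)) u := by
  have hn : HasFDerivAt (fun v => ‖G v‖ ^ 2 / 2)
      ((2 : ℝ)⁻¹ • 2 • (innerSL ℝ (G u)).comp H) u := by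
    simpa only [div_eq_mul_inv, mul_comm _ (2 : ℝ)⁻¹] using hG.norm_sq.const_mul (2 : ℝ)⁻¹
  refine (hasGradientAt_iff_hasFDerivAt.mp hg |>.sub hn).congr_fderiv ?_
  ext v
  simp [hGu]

theorem hasGradientAt_of_comp_id_sub_gradient {g φ : E → ℝ} {K : ℝ≥0} {u : E}
    (hg : ContDiffAt ℝ 2 g u) (hlip : LipschitzWith K (gradient g)) (hK : K < 1)
    (hφ : ∀ᶠ v in 𝓝 u, φ (v - gradient g v) = g v - ‖gradient g v‖ ^ 2 / 2) :
    HasGradientAt φ (gradient g u) (u - gradient g u) := by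
  set H := fderiv ℝ (gradient g) u
  have hH : HasStrictFDerivAt (gradient g) H u :=
    (hg.gradient (n := 1)).hasStrictFDerivAt one_ne_zero
  have hHnorm : ‖H‖ < 1 := (hH.hasFDerivAt.le_of_lipschitz hlip).trans_lt hK
  let e : E ≃L[ℝ] E := .ofUnit (Units.oneSub H hHnorm)
  have hD : HasStrictFDerivAt (fun v => v - gradient g v) (e : E →L[ℝ] E) u :=
    (hasStrictFDerivAt_id u).sub hH
  have hψ := (hg.differentiableAt two_ne_zero).hasGradientAt.hasFDerivAt_sub_half_norm_sq
    hH.hasFDerivAt rfl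
  exact hasGradientAt_iff_hasFDerivAt.mpr
    (hD.hasFDerivAt_of_hasFDerivAt_comp (hψ.congr_of_eventuallyEq hφ))

/-- With `D = Id − ∇g`, `∇g` `L`-Lipschitz with `L < 1`, and `φ` defined on `Im D` by
`φ(D u) = g(u) − ½‖∇g u‖²`: the gradient of `φ` at `x = D u ∈ Im D` equals
`D⁻¹(x) − x = u − D u = ∇g(u)`. -/
theorem stmt_5 {n : ℕ} (g : EuclideanSpace ℝ (Fin n) → ℝ) (L : ℝ)
    (hg : ContDiff ℝ 2 g) (hL : L < 1)
    (hlip : ∀ x y, ‖gradient g x - gradient g y‖ ≤ L * ‖x - y‖)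
    (D : EuclideanSpace ℝ (Fin n) → EuclideanSpace ℝ (Fin n))
    (hD : ∀ x, D x = x - gradient g x)
    (φ : EuclideanSpace ℝ (Fin n) → ℝ)
    (hφ : ∀ u, φ (D u) = g u - ‖gradient g u‖ ^ 2 / 2) :
    ∀ u : EuclideanSpace ℝ (Fin n),
      gradient φ (D u) = u - D u ∧ u - D u = gradient g u := by
  intro u
  obtain rfl : D = fun v => v - gradient g v := funext hD
  have hlipW : LipschitzWith L.toNNReal (gradient g) :=
    .of_dist_le' fun x y => by simpa only [dist_eq_norm] using hlip x y
  refine ⟨?_, sub_sub_cancel u _⟩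
  rw [sub_sub_cancel]
  exact (hasGradientAt_of_comp_id_sub_gradient hg.contDiffAt hlipW (Real.toNNReal_lt_one.mpr hL)
    (.of_forall hφ)).gradient
end

section
/- Sufficient decrease for proximal gradient with nonconvex regularizer: let f be differentiable with L_f-Lipschitz gradient, λL_f < 1, φ proper, and suppose x⁺ minimizes z ↦ φ(z) + ½‖z − (x − λ∇f(x))‖². Then F(x⁺) ≤ F(x) − ½(1−λL_f)‖x⁺−x‖², where F = λf + φ. -/
/-!
Testing the minimality of `x⁺` against `z = x` and expanding the square gives
`φ(x⁺) + λ⟪∇f(x), x⁺ - x⟫ + ½‖x⁺ - x‖² ≤ φ(x)`. The descent lemma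
`f(x⁺) ≤ f(x) + ⟪∇f(x), x⁺ - x⟫ + (L_f/2)‖x⁺ - x‖²`, multiplied by `λ ≥ 0`, eliminates the inner
product. Since `φ` is extended-real valued, the two inequalities are combined by a case split on
the values `±∞`.
-/

open scoped RealInnerProductSpace

theorem EReal.coe_add_le_coe_add_of_add_coe_le {a b : EReal} {r s u v : ℝ}
    (h : a + r ≤ b + s) (h' : u + s ≤ v + r) : u + a ≤ v + b := by
  induction a using EReal.rec with
  | bot => simp
  | top =>
    induction b using EReal.rec with
    | top => simp
    | bot => simp at h
    | coe b => exact absurd h (by norm_cast)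
  | coe a =>
    induction b using EReal.rec with
    | top => simp
    | bot => exact absurd h (by norm_cast)
    | coe b => norm_cast at h ⊢; linarith

variable {E : Type*} [NormedAddCommGroup E] [InnerProductSpace ℝ E] [CompleteSpace E]
  {f : E → ℝ} {L : ℝ}

theorem hasDerivAt_comp_add_smul_s9 {x d : E} {t : ℝ} (hf : DifferentiableAt ℝ f (x + t • d)) :
    HasDerivAt (fun s : ℝ => f (x + s • d)) ⟪gradient f (x + t • d), d⟫ t := by
  have hline : HasDerivAt (fun s : ℝ => x + s • d) d t := by
    simpa using ((hasDerivAt_id t).smul_const d).const_add x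
  simpa [Function.comp_def] using hf.hasGradientAt.hasFDerivAt.comp_hasDerivAt t hline

theorem inner_gradient_add_smul_sub_le
    (hlip : ∀ x y, ‖gradient f x - gradient f y‖ ≤ L * ‖x - y‖) (x d : E) {t : ℝ} (ht : 0 ≤ t) :
    ⟪gradient f (x + t • d) - gradient f x, d⟫ ≤ L * t * ‖d‖ ^ 2 :=
  calc ⟪gradient f (x + t • d) - gradient f x, d⟫
      ≤ ‖gradient f (x + t • d) - gradient f x‖ * ‖d‖ := real_inner_le_norm _ _
    _ ≤ L * ‖t • d‖ * ‖d‖ := by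
        gcongr
        simpa using hlip (x + t • d) x
    _ = L * t * ‖d‖ ^ 2 := by rw [norm_smul, Real.norm_of_nonneg ht]; ring

theorem le_add_inner_gradient_add_sq (hf : Differentiable ℝ f)
    (hlip : ∀ x y, ‖gradient f x - gradient f y‖ ≤ L * ‖x - y‖) (x d : E) :
    f (x + d) ≤ f x + ⟪gradient f x, d⟫ + L / 2 * ‖d‖ ^ 2 := by
  set g := gradient f x
  let h : ℝ → ℝ := fun t => f (x + t • d) - t * ⟪g, d⟫ - L / 2 * ‖d‖ ^ 2 * t ^ 2
  have hderiv (t : ℝ) :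
      HasDerivAt h (⟪gradient f (x + t • d), d⟫ - ⟪g, d⟫ - L / 2 * ‖d‖ ^ 2 * (2 * t)) t := by
    have := ((hasDerivAt_comp_add_smul_s9 (hf (x + t • d))).sub
      ((hasDerivAt_id t).mul_const ⟪g, d⟫)).sub ((hasDerivAt_pow 2 t).const_mul (L / 2 * ‖d‖ ^ 2))
    simpa [h, Pi.sub_def] using this
  have hanti : AntitoneOn h (Set.Icc 0 1) := by
    have hdiff : Differentiable ℝ h := fun t => (hderiv t).differentiableAt
    refine antitoneOn_of_deriv_nonpos (convex_Icc 0 1) hdiff.continuous.continuousOn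
      hdiff.differentiableOn fun t ht => ?_
    rw [interior_Icc] at ht
    have := inner_gradient_add_smul_sub_le hlip x d ht.1.le
    rw [(hderiv t).deriv, ← inner_sub_left]
    linarith
  have h10 : h 1 ≤ h 0 := hanti (by norm_num) (by norm_num) zero_le_one
  simp only [h, one_smul, one_mul, one_pow, mul_one, zero_smul, add_zero, zero_mul, sub_zero,
    zero_pow two_ne_zero, mul_zero] at h10
  linarith

theorem mul_add_sq_norm_le_of_lipschitz_gradient (hf : Differentiable ℝ f)
    (hlip : ∀ x y, ‖gradient f x - gradient f y‖ ≤ L * ‖x - y‖) {lam : ℝ} (hlam : 0 ≤ lam)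
    (x y : E) :
    lam * f y + (1 - lam * L) / 2 * ‖y - x‖ ^ 2 + ‖x - (x - lam • gradient f x)‖ ^ 2 / 2
      ≤ lam * f x + ‖y - (x - lam • gradient f x)‖ ^ 2 / 2 := by
  set g := gradient f x
  have hdesc := le_add_inner_gradient_add_sq hf hlip x (y - x)
  rw [add_sub_cancel] at hdesc
  have hexp : ‖y - (x - lam • g)‖ ^ 2 = ‖y - x‖ ^ 2 + 2 * (lam * ⟪g, y - x⟫) + ‖lam • g‖ ^ 2 := by
    rw [sub_sub_eq_add_sub, add_comm, add_sub_assoc, norm_add_sq_real, real_inner_smul_left]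
    ring
  rw [hexp, sub_sub_cancel]
  nlinarith [mul_le_mul_of_nonneg_left hdesc hlam]

theorem stmt_9_general {n : ℕ} (f : EuclideanSpace ℝ (Fin n) → ℝ) (Lf lam : ℝ)
    (hf : Differentiable ℝ f)
    (hlip : ∀ x y, ‖gradient f x - gradient f y‖ ≤ Lf * ‖x - y‖)
    (hlam : 0 < lam)
    (φ : EuclideanSpace ℝ (Fin n) → EReal)
    (F : EuclideanSpace ℝ (Fin n) → EReal)
    (hF : ∀ x, F x = ((lam * f x : ℝ) : EReal) + φ x)
    (x xp : EuclideanSpace ℝ (Fin n))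
    (hmin : ∀ z, φ xp + ((‖xp - (x - lam • gradient f x)‖ ^ 2 / 2 : ℝ) : EReal)
      ≤ φ z + ((‖z - (x - lam • gradient f x)‖ ^ 2 / 2 : ℝ) : EReal)) :
    F xp + (((1 - lam * Lf) / 2 * ‖xp - x‖ ^ 2 : ℝ) : EReal) ≤ F x := by
  rw [hF, hF, add_right_comm, ← EReal.coe_add]
  exact EReal.coe_add_le_coe_add_of_add_coe_le (hmin x)
    (mul_add_sq_norm_le_of_lipschitz_gradient hf hlip hlam.le x xp)

/-- Sufficient decrease for the proximal gradient step with a nonconvex regularizer: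
if `x⁺` minimizes `z ↦ φ(z) + ½‖z − (x − λ∇f(x))‖²` and `λ L_f < 1`, then
`F(x⁺) + ((1−λL_f)/2)‖x⁺−x‖² ≤ F(x)` where `F = λf + φ`. -/
theorem stmt_9 {n : ℕ} (f : EuclideanSpace ℝ (Fin n) → ℝ) (Lf lam : ℝ)
    (hf : Differentiable ℝ f)
    (hlip : ∀ x y, ‖gradient f x - gradient f y‖ ≤ Lf * ‖x - y‖)
    (hlam : 0 < lam) (hstep : lam * Lf < 1)
    (φ : EuclideanSpace ℝ (Fin n) → EReal) (hproper : ∃ x, φ x ≠ ⊤)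
    (F : EuclideanSpace ℝ (Fin n) → EReal)
    (hF : ∀ x, F x = ((lam * f x : ℝ) : EReal) + φ x)
    (x xp : EuclideanSpace ℝ (Fin n))
    (hmin : ∀ z, φ xp + ((‖xp - (x - lam • gradient f x)‖ ^ 2 / 2 : ℝ) : EReal)
      ≤ φ z + ((‖z - (x - lam • gradient f x)‖ ^ 2 / 2 : ℝ) : EReal)) :
    F xp + (((1 - lam * Lf) / 2 * ‖xp - x‖ ^ 2 : ℝ) : EReal) ≤ F x :=
  stmt_9_general f Lf lam hf hlip hlam φ F hF x xp hmin
end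

section
/- Stationarity of DRS cluster points: suppose sequences (y_k), (z_k), (x_k) satisfy 0 = ∇φ(y_{k+1}) + (y_{k+1} − x_k) and 0 ∈ λ∂f(z_{k+1}) + (z_{k+1} − 2y_{k+1} + x_k) for all k, with ‖y_k − z_k‖ → 0, φ C¹ with continuous gradient, f proper lsc, and (y_{k_j}, z_{k_j}, x_{k_j}) → (y*, z*, x*) with f(z_{k_j}) → f(z*). Then y* = z* and −∇φ(y*) ∈ λ∂f(y*), i.e., y* is a stationary point of λf + φ. -/
open Filter Topology

/-! Since `‖y_k − z_k‖ → 0`, the cluster points `y*` and `z*` coincide. Eliminating `x_k` between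
the two optimality conditions exhibits `λ⁻¹ • (y_{k+1} − z_{k+1} − ∇φ(y_{k+1}))` as a subgradient
of `f` at `z_{k+1}`; along the subsequence these converge to `−λ⁻¹ • ∇φ(y*)` by continuity of
`∇φ`, and closedness of `∂f` under `f`-attentive convergence puts the limit in `∂f(y*)`. -/

/-- The closedness property of the limiting subdifferential `∂f`. -/
def SubdifferentialClosed {E F G : Type*} [TopologicalSpace E] [TopologicalSpace F]
    [TopologicalSpace G] (f : E → F) (subf : E → Set G) : Prop :=
  ∀ (x : E) (v : G) (xk : ℕ → E) (vk : ℕ → G), Tendsto xk atTop (𝓝 x) →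
    Tendsto (fun k => f (xk k)) atTop (𝓝 (f x)) → Tendsto vk atTop (𝓝 v) →
    (∀ k, vk k ∈ subf (xk k)) → v ∈ subf x

theorem SubdifferentialClosed.mem_of_eventually {E F G : Type*} [TopologicalSpace E]
    [TopologicalSpace F] [TopologicalSpace G] {f : E → F} {subf : E → Set G}
    (h : SubdifferentialClosed f subf) {x : E} {v : G} {xk : ℕ → E} {vk : ℕ → G}
    (hx : Tendsto xk atTop (𝓝 x)) (hf : Tendsto (fun k => f (xk k)) atTop (𝓝 (f x)))
    (hv : Tendsto vk atTop (𝓝 v)) (hmem : ∀ᶠ k in atTop, vk k ∈ subf (xk k)) :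
    v ∈ subf x := by
  obtain ⟨N, hN⟩ := eventually_atTop.1 hmem
  have hshift := tendsto_add_atTop_nat N
  exact h x v (fun k => xk (k + N)) (fun k => vk (k + N)) (hx.comp hshift) (hf.comp hshift)
    (hv.comp hshift) fun k => hN _ (Nat.le_add_left N k)

theorem eq_of_tendsto_of_tendsto_norm_sub {ι E : Type*} [NormedAddCommGroup E] {l : Filter ι}
    [l.NeBot] {a b : ι → E} {a₀ b₀ : E} (ha : Tendsto a l (𝓝 a₀)) (hb : Tendsto b l (𝓝 b₀))
    (hab : Tendsto (fun i => ‖a i - b i‖) l (𝓝 0)) : a₀ = b₀ :=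
  norm_sub_eq_zero_iff.1 <| tendsto_nhds_unique (ha.sub hb).norm hab

theorem ContDiff.continuous_gradient {𝕜 F : Type*} [RCLike 𝕜] [NormedAddCommGroup F]
    [InnerProductSpace 𝕜 F] [CompleteSpace F] {φ : F → 𝕜} (hφ : ContDiff 𝕜 1 φ) :
    Continuous (gradient φ) :=
  (InnerProductSpace.toDual 𝕜 F).symm.continuous.comp (hφ.continuous_fderiv one_ne_zero)

theorem drs_smul_subgradient_eq {E : Type*} [AddCommGroup E] [Module ℝ E] {g x y z v : E}
    {lam : ℝ} (hy : g + (y - x) = 0) (hz : lam • v + (z - (2 : ℝ) • y + x) = 0) :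
    lam • v = y - z - g := by
  linear_combination (norm := module) hz + hy

theorem stmt_18_general {n : ℕ} (f : EuclideanSpace ℝ (Fin n) → EReal)
    (subf : EuclideanSpace ℝ (Fin n) → Set (EuclideanSpace ℝ (Fin n)))
    (hclosed : ∀ (x v : EuclideanSpace ℝ (Fin n)) (xk vk : ℕ → EuclideanSpace ℝ (Fin n)),
      Tendsto xk atTop (nhds x) → Tendsto (fun k => f (xk k)) atTop (nhds (f x)) →
      Tendsto vk atTop (nhds v) → (∀ k, vk k ∈ subf (xk k)) → v ∈ subf x)
    (φ : EuclideanSpace ℝ (Fin n) → ℝ) (hφ : ContDiff ℝ 1 φ)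
    (lam : ℝ) (hlam : 0 < lam)
    (y z x : ℕ → EuclideanSpace ℝ (Fin n))
    (hy : ∀ k, gradient φ (y (k + 1)) + (y (k + 1) - x k) = 0)
    (hz : ∀ k, ∃ v ∈ subf (z (k + 1)),
      lam • v + (z (k + 1) - (2 : ℝ) • y (k + 1) + x k) = 0)
    (hres : Tendsto (fun k => ‖y k - z k‖) atTop (nhds 0))
    (ys zs : EuclideanSpace ℝ (Fin n)) (j : ℕ → ℕ) (hj : StrictMono j)
    (hyc : Tendsto (fun i => y (j i)) atTop (nhds ys))
    (hzc : Tendsto (fun i => z (j i)) atTop (nhds zs))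
    (hfc : Tendsto (fun i => f (z (j i))) atTop (nhds (f zs))) :
    ys = zs ∧ ∃ v ∈ subf ys, lam • v = -gradient φ ys := by
  have heq : ys = zs := eq_of_tendsto_of_tendsto_norm_sub hyc hzc (hres.comp hj.tendsto_atTop)
  subst heq
  set w : ℕ → EuclideanSpace ℝ (Fin n) := fun m => lam⁻¹ • (y m - z m - gradient φ (y m))
  have hw : ∀ᶠ m in atTop, w m ∈ subf (z m) := by
    filter_upwards [eventually_ge_atTop 1] with m hm
    obtain ⟨k, rfl⟩ := Nat.exists_eq_add_of_le' hm
    obtain ⟨v, hv, hv0⟩ := hz k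
    have hwv : v = w (k + 1) :=
      (eq_inv_smul_iff₀ hlam.ne').2 (drs_smul_subgradient_eq (hy k) hv0)
    rwa [← hwv]
  have hwc : Tendsto (fun i => w (j i)) atTop (𝓝 (lam⁻¹ • (ys - ys - gradient φ ys))) :=
    ((hyc.sub hzc).sub ((hφ.continuous_gradient.tendsto ys).comp hyc)).const_smul _
  refine ⟨rfl, _, SubdifferentialClosed.mem_of_eventually hclosed hzc hfc hwc
    (hj.tendsto_atTop.eventually hw), ?_⟩
  rw [smul_inv_smul₀ hlam.ne', sub_self, zero_sub]

/-- Stationarity of DRS cluster points: from the optimality conditions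
`0 = ∇φ(y_{k+1}) + (y_{k+1} − x_k)` and `0 ∈ λ∂f(z_{k+1}) + (z_{k+1} − 2y_{k+1} + x_k)`,
vanishing residual `‖y_k − z_k‖ → 0`, and a convergent subsequence along which
`f(z_{k_j}) → f(z*)`, one gets `y* = z*` and `−∇φ(y*) ∈ λ∂f(y*)`. -/
theorem stmt_18 {n : ℕ} (f : EuclideanSpace ℝ (Fin n) → EReal)
    (hproper : ∃ x, f x ≠ ⊤) (hbot : ∀ x, f x ≠ ⊥) (hlsc : LowerSemicontinuous f)
    (subf : EuclideanSpace ℝ (Fin n) → Set (EuclideanSpace ℝ (Fin n)))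
    (hclosed : ∀ (x v : EuclideanSpace ℝ (Fin n)) (xk vk : ℕ → EuclideanSpace ℝ (Fin n)),
      Tendsto xk atTop (nhds x) → Tendsto (fun k => f (xk k)) atTop (nhds (f x)) →
      Tendsto vk atTop (nhds v) → (∀ k, vk k ∈ subf (xk k)) → v ∈ subf x)
    (φ : EuclideanSpace ℝ (Fin n) → ℝ) (hφ : ContDiff ℝ 1 φ)
    (lam : ℝ) (hlam : 0 < lam)
    (y z x : ℕ → EuclideanSpace ℝ (Fin n))
    (hy : ∀ k, gradient φ (y (k + 1)) + (y (k + 1) - x k) = 0)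
    (hz : ∀ k, ∃ v ∈ subf (z (k + 1)),
      lam • v + (z (k + 1) - (2 : ℝ) • y (k + 1) + x k) = 0)
    (hres : Tendsto (fun k => ‖y k - z k‖) atTop (nhds 0))
    (ys zs xs : EuclideanSpace ℝ (Fin n)) (j : ℕ → ℕ) (hj : StrictMono j)
    (hyc : Tendsto (fun i => y (j i)) atTop (nhds ys))
    (hzc : Tendsto (fun i => z (j i)) atTop (nhds zs))
    (hxc : Tendsto (fun i => x (j i)) atTop (nhds xs))
    (hfc : Tendsto (fun i => f (z (j i))) atTop (nhds (f zs))) :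
    ys = zs ∧ ∃ v ∈ subf ys, lam • v = -gradient φ ys :=
  stmt_18_general f subf hclosed φ hφ lam hlam y z x hy hz hres ys zs j hj hyc hzc hfc
end
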